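/- Let f : ℝ^N × ℝ^d → [0,∞) be Q-periodic in the first variable. For γ ∈ Q define f_hom^γ(b) := inf_{R∈ℕ} inf { ⨍_{RQ} f(y + γ, b + w(y)) dy : w ∈ L¹_{RQ-per}(ℝ^N;ℝ^d) ∩ ker 𝒜, ⨍_{RQ} w = 0 }. Then f_hom^γ(b) = f_hom(b) for every b ∈ ℝ^d and every γ ∈ Q, i.e., the cell formula is invariant under translations of the integrand in the spatial variable. -/

import Mathlib

/-! The map `w ↦ w (· - γ)` preserves the admissible correctors and turns the average of
`f (y + γ) (b + w y)` into that of `f y (b + w (y - γ))`; these averages agree because a function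
that is `R`-periodic in each coordinate has the same integral over every translate of its period
cell, the half-open cube `∏ [0, R)` being a fundamental domain of the lattice `R ℤ^N` that agrees
with `cubeR N R` up to a null set. -/

open MeasureTheory Filter

/-- The open cube `R·Q = (-R/2, R/2)^N` centered at the origin. -/
def cubeR (N : ℕ) (R : ℝ) : Set (Fin N → ℝ) := {x | ∀ i, |x i| < R / 2}

open Set Function Submodule

section FundamentalDomain

variable {α E : Type*} [AddCommGroup α] {L : AddSubgroup α} {g : α → E}

theorem map_vadd_of_forall_periodic (hg : ∀ v ∈ L, Periodic g v) (v : L) (x : α) :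
    g (v +ᵥ x) = g x := by
  rw [AddSubgroup.vadd_def, vadd_eq_add, add_comm]
  exact hg v v.2 x

variable [MeasurableSpace α] [MeasurableAdd α] {μ : Measure α} [μ.IsAddLeftInvariant] {s : Set α}

theorem MeasureTheory.IsAddFundamentalDomain.preimage_add_right
    (h : IsAddFundamentalDomain L s μ) (γ : α) :
    IsAddFundamentalDomain L ((· + γ) ⁻¹' s) μ :=
  h.preimage_of_equiv (measurePreserving_add_right μ γ).quasiMeasurePreserving
    bijective_id fun v x => add_assoc (v : α) x γ

variable [Countable L] [NormedAddCommGroup E]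

theorem MeasureTheory.IsAddFundamentalDomain.integrableOn_comp_add_right_iff
    (h : IsAddFundamentalDomain L s μ) (hg : ∀ v ∈ L, Periodic g v) (γ : α) :
    IntegrableOn (fun x => g (x + γ)) s μ ↔ IntegrableOn g s μ := by
  have hs : (· + γ) ⁻¹' ((· + -γ) ⁻¹' s) = s := by ext; simp
  have hg_vadd := map_vadd_of_forall_periodic hg
  calc IntegrableOn (fun x => g (x + γ)) s μ
      ↔ IntegrableOn (g ∘ (· + γ)) ((· + γ) ⁻¹' ((· + -γ) ⁻¹' s)) μ := by rw [hs]; rfl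
    _ ↔ IntegrableOn g ((· + -γ) ⁻¹' s) μ :=
      (measurePreserving_add_right μ γ).integrableOn_comp_preimage
        (measurableEmbedding_addRight γ)
    _ ↔ IntegrableOn g s μ := (h.preimage_add_right (-γ)).integrableOn_iff h hg_vadd

theorem MeasureTheory.IsAddFundamentalDomain.setIntegral_comp_add_right [NormedSpace ℝ E]
    (h : IsAddFundamentalDomain L s μ) (hg : ∀ v ∈ L, Periodic g v) (γ : α) :
    ∫ x in s, g (x + γ) ∂μ = ∫ x in s, g x ∂μ := by
  have hs : (· + γ) ⁻¹' ((· + -γ) ⁻¹' s) = s := by ext; simp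
  have hg_vadd := map_vadd_of_forall_periodic hg
  calc ∫ x in s, g (x + γ) ∂μ = ∫ x in (· + γ) ⁻¹' ((· + -γ) ⁻¹' s), g (x + γ) ∂μ := by rw [hs]
    _ = ∫ x in (· + -γ) ⁻¹' s, g x ∂μ :=
      (measurePreserving_add_right μ γ).setIntegral_preimage_emb
        (measurableEmbedding_addRight γ) _ _
    _ = ∫ x in s, g x ∂μ := (h.preimage_add_right (-γ)).setIntegral_eq h hg_vadd

end FundamentalDomain

theorem Function.Periodic.of_mem_span_int {ι E F : Type*} [AddCommGroup E] {v : ι → E}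
    {g : E → F} (hg : ∀ i, Periodic g (v i)) {u : E} (hu : u ∈ span ℤ (range v)) :
    Periodic g u := by
  induction hu using Submodule.span_induction with
  | mem u hu => obtain ⟨i, rfl⟩ := hu; exact hg i
  | zero => exact periodic_with_period_zero g
  | add u u' _ _ hu hu' => exact hu.add_period hu'
  | smul n u _ hu => exact hu.zsmul n

section Cube

variable {N : ℕ} {R : ℝ}

noncomputable def cubeBasis (N : ℕ) (hR : R ≠ 0) : Module.Basis (Fin N) ℝ (Fin N → ℝ) :=
  (Pi.basisFun ℝ (Fin N)).isUnitSMul fun _ => hR.isUnit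

theorem cubeBasis_apply (hR : R ≠ 0) (i : Fin N) : cubeBasis N hR i = Pi.single i R := by
  ext j
  simp [cubeBasis, Module.Basis.isUnitSMul_apply, Pi.single_apply]

theorem cubeBasis_repr (hR : R ≠ 0) (x : Fin N → ℝ) (i : Fin N) :
    (cubeBasis N hR).repr x i = R⁻¹ * x i := by
  simp [cubeBasis, Module.Basis.isUnitSMul, Module.Basis.repr_unitsSMul, Units.smul_def]

theorem fundamentalDomain_cubeBasis (hR : 0 < R) :
    ZSpan.fundamentalDomain (cubeBasis N hR.ne') = univ.pi fun _ => Ico 0 R := by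
  ext x
  simp only [ZSpan.mem_fundamentalDomain, cubeBasis_repr, Set.mem_pi, mem_univ, true_imp_iff,
    mem_Ico, inv_mul_eq_div, le_div_iff₀ hR, div_lt_one hR, zero_mul]

theorem cubeR_ae_eq_preimage :
    cubeR N R =ᵐ[volume] (· + fun _ => R / 2) ⁻¹' (univ.pi fun _ => Ico 0 R) := by
  have hcube : cubeR N R = univ.pi fun _ => Ioo (-(R / 2)) (R / 2) := by
    ext x; simp [cubeR, abs_lt]
  have hpre : (· + fun _ => R / 2) ⁻¹' (univ.pi fun _ => Ico 0 R) =
      univ.pi fun (_ : Fin N) => Ico (-(R / 2)) (R / 2) := by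
    ext x
    simp only [mem_preimage, Set.mem_pi, mem_univ, true_imp_iff, mem_Ico, Pi.add_apply]
    refine forall_congr' fun i => and_congr ?_ ?_ <;> constructor <;> intro h <;> linarith
  rw [hcube, hpre, volume_pi]
  exact Measure.ae_eq_set_pi fun _ _ => Ioo_ae_eq_Ico

theorem isAddFundamentalDomain_pi_Ico (hR : 0 < R) :
    IsAddFundamentalDomain (span ℤ (range (cubeBasis N hR.ne'))).toAddSubgroup
      (univ.pi fun (_ : Fin N) => Ico (0 : ℝ) R) :=
  fundamentalDomain_cubeBasis hR ▸ ZSpan.isAddFundamentalDomain' _ volume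

instance (hR : R ≠ 0) : Countable (span ℤ (range (cubeBasis N hR))).toAddSubgroup :=
  inferInstanceAs (Countable (span ℤ (range (cubeBasis N hR))))

variable {E : Type*} {g : (Fin N → ℝ) → E}

theorem periodic_of_mem_span_cubeBasis (hR : R ≠ 0) (hg : ∀ i, Periodic g (Pi.single i R)) :
    ∀ v ∈ (span ℤ (range (cubeBasis N hR))).toAddSubgroup, Periodic g v :=
  fun _ => Periodic.of_mem_span_int fun i => cubeBasis_apply hR i ▸ hg i

theorem integrableOn_cubeR_comp_add_iff [NormedAddCommGroup E] (hR : 0 < R)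
    (hg : ∀ i, Periodic g (Pi.single i R)) (γ : Fin N → ℝ) :
    IntegrableOn (fun x => g (x + γ)) (cubeR N R) ↔ IntegrableOn g (cubeR N R) := by
  rw [IntegrableOn, IntegrableOn, Measure.restrict_congr_set cubeR_ae_eq_preimage]
  exact ((isAddFundamentalDomain_pi_Ico hR).preimage_add_right _).integrableOn_comp_add_right_iff
    (periodic_of_mem_span_cubeBasis hR.ne' hg) γ

theorem setAverage_cubeR_comp_add [NormedAddCommGroup E] [NormedSpace ℝ E] (hR : 0 < R)
    (hg : ∀ i, Periodic g (Pi.single i R)) (γ : Fin N → ℝ) :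
    ⨍ x in cubeR N R, g (x + γ) = ⨍ x in cubeR N R, g x := by
  rw [Measure.restrict_congr_set cubeR_ae_eq_preimage, setAverage_eq, setAverage_eq,
    ((isAddFundamentalDomain_pi_Ico hR).preimage_add_right _).setIntegral_comp_add_right
      (periodic_of_mem_span_cubeBasis hR.ne' hg) γ]

end Cube

/-- `f_hom^γ(b)` is `sInf (cellFormulaValues kerA (fun y => f (y + γ)) b)`. -/
def cellFormulaValues {N d : ℕ} (kerA : ((Fin N → ℝ) → (Fin d → ℝ)) → Prop)
    (F : (Fin N → ℝ) → (Fin d → ℝ) → ℝ) (b : Fin d → ℝ) : Set ℝ :=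
  { v : ℝ | ∃ R : ℕ, 0 < R ∧ ∃ w : (Fin N → ℝ) → (Fin d → ℝ),
    Measurable w ∧ IntegrableOn w (cubeR N R) ∧
    (∀ (x : Fin N → ℝ) (i : Fin N), w (x + Pi.single i (R : ℝ)) = w x) ∧
    (⨍ x in cubeR N R, w x) = 0 ∧ kerA w ∧
    v = ⨍ y in cubeR N R, F y (b + w y) }

theorem Function.Periodic.single_natCast {N : ℕ} {E : Type*} {g : (Fin N → ℝ) → E} {i : Fin N}
    (hg : Periodic g (Pi.single i 1)) (n : ℕ) : Periodic g (Pi.single i (n : ℝ)) := by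
  simpa [← Pi.single_smul] using hg.nsmul n

theorem cellFormulaValues_comp_add_subset {N d : ℕ} {F : (Fin N → ℝ) → (Fin d → ℝ) → ℝ}
    (hF : ∀ (ξ : Fin d → ℝ) (x : Fin N → ℝ) (i : Fin N), F (x + Pi.single i 1) ξ = F x ξ)
    {kerA : ((Fin N → ℝ) → (Fin d → ℝ)) → Prop}
    (hker : ∀ (w : (Fin N → ℝ) → (Fin d → ℝ)) (γ : Fin N → ℝ),
      kerA w → kerA (fun x => w (x - γ)))
    (γ : Fin N → ℝ) (b : Fin d → ℝ) :
    cellFormulaValues kerA (fun y => F (y + γ)) b ⊆ cellFormulaValues kerA F b := by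
  rintro _ ⟨R, hR, w, hw_meas, hw_int, hw_per, hw_avg, hw_ker, rfl⟩
  have hR' : (0 : ℝ) < R := Nat.cast_pos.mpr hR
  have hw_per' : ∀ i, Periodic w (Pi.single i (R : ℝ)) := fun i x => hw_per x i
  have hg_per : ∀ i, Periodic (fun y => F (y + γ) (b + w y)) (Pi.single i (R : ℝ)) := by
    intro i y
    simp only [hw_per, add_right_comm y _ γ]
    exact Periodic.single_natCast (g := (F · (b + w y))) (fun x => hF _ x i) R _
  refine ⟨R, hR, fun x => w (x - γ), hw_meas.comp (measurable_sub_const γ), ?_, ?_, ?_,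
    hker w γ hw_ker, ?_⟩
  · simpa only [sub_eq_add_neg] using (integrableOn_cubeR_comp_add_iff hR' hw_per' _).2 hw_int
  · intro x i
    simp only [add_sub_right_comm, hw_per]
  · simpa only [sub_eq_add_neg] using (setAverage_cubeR_comp_add hR' hw_per' (-γ)).trans hw_avg
  · rw [← setAverage_cubeR_comp_add hR' hg_per (-γ)]
    simp only [neg_add_cancel_right, sub_eq_add_neg]

theorem fhom_translation_invariance_general {N d : ℕ}
    (f : (Fin N → ℝ) → (Fin d → ℝ) → ℝ)
    (hper : ∀ (ξ : Fin d → ℝ) (x : Fin N → ℝ) (i : Fin N),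
      f (x + Pi.single i 1) ξ = f x ξ)
    (kerA : ((Fin N → ℝ) → (Fin d → ℝ)) → Prop)
    (hker_transl : ∀ (w : (Fin N → ℝ) → (Fin d → ℝ)) (γ : Fin N → ℝ),
      kerA w → kerA (fun x => w (x - γ)))
    (γ : Fin N → ℝ) (b : Fin d → ℝ) :
    sInf { v : ℝ | ∃ R : ℕ, 0 < R ∧ ∃ w : (Fin N → ℝ) → (Fin d → ℝ),
        Measurable w ∧ IntegrableOn w (cubeR N R) ∧
        (∀ (x : Fin N → ℝ) (i : Fin N), w (x + Pi.single i (R : ℝ)) = w x) ∧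
        (⨍ x in cubeR N R, w x) = 0 ∧ kerA w ∧
        v = ⨍ y in cubeR N R, f (y + γ) (b + w y) }
      = sInf { v : ℝ | ∃ R : ℕ, 0 < R ∧ ∃ w : (Fin N → ℝ) → (Fin d → ℝ),
        Measurable w ∧ IntegrableOn w (cubeR N R) ∧
        (∀ (x : Fin N → ℝ) (i : Fin N), w (x + Pi.single i (R : ℝ)) = w x) ∧
        (⨍ x in cubeR N R, w x) = 0 ∧ kerA w ∧
        v = ⨍ y in cubeR N R, f y (b + w y) } := by
  change sInf (cellFormulaValues kerA (fun y => f (y + γ)) b) = sInf (cellFormulaValues kerA f b)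
  have hper_γ : ∀ ξ x i, f (x + Pi.single i 1 + γ) ξ = f (x + γ) ξ := fun ξ x i => by
    rw [add_right_comm, hper]
  congr 1
  refine (cellFormulaValues_comp_add_subset hper hker_transl γ b).antisymm ?_
  simpa only [neg_add_cancel_right] using
    cellFormulaValues_comp_add_subset (F := fun y => f (y + γ)) hper_γ hker_transl (-γ) b

/-- invariance of the cell formula under spatial translations of
the integrand: `f_hom^γ(b) = f_hom(b)` for every `γ ∈ Q`.  The kernel
constraint `𝒜 w = 0` is encoded by a translation-invariant predicate `kerA`,
as is the case for any constant-coefficient operator. -/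
theorem fhom_translation_invariance {N d : ℕ}
    (f : (Fin N → ℝ) → (Fin d → ℝ) → ℝ)
    (hf0 : ∀ x ξ, 0 ≤ f x ξ)
    (hmeas : Measurable (Function.uncurry f))
    (C₂ : ℝ) (hupp : ∀ x ξ, f x ξ ≤ C₂ * (1 + ‖ξ‖))
    (hper : ∀ (ξ : Fin d → ℝ) (x : Fin N → ℝ) (i : Fin N),
      f (x + Pi.single i 1) ξ = f x ξ)
    (kerA : ((Fin N → ℝ) → (Fin d → ℝ)) → Prop)
    (hker_transl : ∀ (w : (Fin N → ℝ) → (Fin d → ℝ)) (γ : Fin N → ℝ),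
      kerA w → kerA (fun x => w (x - γ)))
    (γ : Fin N → ℝ) (hγ : γ ∈ cubeR N 1) (b : Fin d → ℝ) :
    sInf { v : ℝ | ∃ R : ℕ, 0 < R ∧ ∃ w : (Fin N → ℝ) → (Fin d → ℝ),
        Measurable w ∧ IntegrableOn w (cubeR N R) ∧
        (∀ (x : Fin N → ℝ) (i : Fin N), w (x + Pi.single i (R : ℝ)) = w x) ∧
        (⨍ x in cubeR N R, w x) = 0 ∧ kerA w ∧
        v = ⨍ y in cubeR N R, f (y + γ) (b + w y) }
      = sInf { v : ℝ | ∃ R : ℕ, 0 < R ∧ ∃ w : (Fin N → ℝ) → (Fin d → ℝ),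
        Measurable w ∧ IntegrableOn w (cubeR N R) ∧
        (∀ (x : Fin N → ℝ) (i : Fin N), w (x + Pi.single i (R : ℝ)) = w x) ∧
        (⨍ x in cubeR N R, w x) = 0 ∧ kerA w ∧
        v = ⨍ y in cubeR N R, f y (b + w y) } :=
  fhom_translation_invariance_general f hper kerA hker_transl γ b
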